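/- arXiv:0809.0569 — 7 statements merged into one kernel-verified Lean document; each statement's English description precedes it below -/
import Mathlib

section
/- Let σ > 0, V ∈ ℝ, ψ : ℝ → ℝ continuously differentiable and 1-periodic, and suppose ρ̄ : ℝ → ℝ is continuously differentiable, strictly positive, 1-periodic, and satisfies σ ρ̄'(z) + ψ'(z) ρ̄(z) + V ρ̄(z) = I for all z ∈ ℝ, where I ∈ ℝ is a constant. Then V = I · ∫₀¹ ρ̄(z)⁻¹ dz. -/
open MeasureTheory intervalIntegral

/-! Along the stationary equation, `Φ = σ log ρ̄ + ψ` has derivative `I ρ̄⁻¹ - V`; since `Φ` is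
periodic, this derivative integrates to zero over a period. -/

theorem Function.Periodic.integral_deriv_eq_zero {f f' : ℝ → ℝ} {T : ℝ}
    (hf : Function.Periodic f T) (hderiv : ∀ x, HasDerivAt f (f' x) x)
    (hint : IntervalIntegrable f' volume 0 T) :
    ∫ x in (0:ℝ)..T, f' x = 0 := by
  rw [integral_eq_sub_of_hasDerivAt (fun x _ => hderiv x) hint, hf.eq, sub_self]

theorem hasDerivAt_mul_log_add_of_stationary {σ V I ρ' ψ' z : ℝ} {ρ ψ : ℝ → ℝ}
    (hρ : HasDerivAt ρ ρ' z) (hψ : HasDerivAt ψ ψ' z) (hρz : ρ z ≠ 0)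
    (heq : σ * ρ' + ψ' * ρ z + V * ρ z = I) :
    HasDerivAt (fun x => σ * Real.log (ρ x) + ψ x) (I * (ρ z)⁻¹ - V) z := by
  refine (((hρ.log hρz).const_mul σ).add hψ).congr_deriv ?_
  rw [← heq]
  field_simp
  ring

theorem stmt1_general (σ V I : ℝ) (ψ : ℝ → ℝ)
    (hψ : ContDiff ℝ 1 ψ) (hψper : ∀ x, ψ (x + 1) = ψ x)
    (ρ : ℝ → ℝ) (hρ : ContDiff ℝ 1 ρ) (hρpos : ∀ x, 0 < ρ x)
    (hρper : ∀ x, ρ (x + 1) = ρ x)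
    (heq : ∀ z, σ * deriv ρ z + deriv ψ z * ρ z + V * ρ z = I) :
    V = I * ∫ z in (0:ℝ)..1, (ρ z)⁻¹ := by
  have hρne : ∀ x, ρ x ≠ 0 := fun x => (hρpos x).ne'
  have hperiodic : Function.Periodic (fun x => σ * Real.log (ρ x) + ψ x) 1 := by
    intro x
    simp only [hρper, hψper]
  have hderiv (z : ℝ) :=
    hasDerivAt_mul_log_add_of_stationary (hρ.differentiable one_ne_zero z).hasDerivAt
      (hψ.differentiable one_ne_zero z).hasDerivAt (hρne z) (heq z)
  have hinv : IntervalIntegrable (fun z => (ρ z)⁻¹) volume 0 1 :=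
    (hρ.continuous.inv₀ hρne).intervalIntegrable 0 1
  have hzero := hperiodic.integral_deriv_eq_zero hderiv
    ((hinv.const_mul I).sub intervalIntegrable_const)
  rw [integral_sub (hinv.const_mul I) intervalIntegrable_const,
    intervalIntegral.integral_const_mul, intervalIntegral.integral_const] at hzero
  simp only [sub_zero, smul_eq_mul, one_mul] at hzero
  linarith

/-- Dividing the stationary Fokker–Planck equation by the positive periodic
solution `ρ̄` and integrating over one period yields `V = I ∫₀¹ ρ̄⁻¹`. -/
theorem stmt1 (σ V I : ℝ) (hσ : 0 < σ) (ψ : ℝ → ℝ)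
    (hψ : ContDiff ℝ 1 ψ) (hψper : ∀ x, ψ (x + 1) = ψ x)
    (ρ : ℝ → ℝ) (hρ : ContDiff ℝ 1 ρ) (hρpos : ∀ x, 0 < ρ x)
    (hρper : ∀ x, ρ (x + 1) = ρ x)
    (heq : ∀ z, σ * deriv ρ z + deriv ψ z * ρ z + V * ρ z = I) :
    V = I * ∫ z in (0:ℝ)..1, (ρ z)⁻¹ :=
  stmt1_general σ V I ψ hψ hψper ρ hρ hρpos hρper heq
end

section
/- Let σ > 0, V ∈ ℝ, ψ : ℝ → ℝ continuously differentiable and 1-periodic, and let (I, ρ̄) be the unique pair with ρ̄ continuously differentiable, strictly positive, 1-periodic, ∫₀¹ ρ̄ = 1, and σ ρ̄' + ψ' ρ̄ + V ρ̄ = I. Define the mean velocity κ := V − I. Then κ = V · (1 − 1/∫₀¹ ρ̄⁻¹), |κ| ≤ |V|, and κ · V ≥ 0 (the mean velocity is always in the direction of the applied voltage). -/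
open MeasureTheory intervalIntegral

/-!
Dividing the stationary equation by `ρ̄` shows that `σ log ρ̄ + ψ + V z` is an
antiderivative of `I / ρ̄`; integrating over one period, where the periodic terms
cancel, gives `I ∫₀¹ ρ̄⁻¹ = V`. Pointwise `ρ̄⁻¹ ≥ 2 - ρ̄`, so `∫₀¹ ρ̄⁻¹ ≥ 1` under the
normalisation `∫₀¹ ρ̄ = 1`. Hence `κ = V - I = V (1 - 1/∫₀¹ ρ̄⁻¹)` with a factor
`1 - 1/∫₀¹ ρ̄⁻¹ ∈ [0, 1)`.
-/

theorem hasDerivAt_log_density_add_potential {ρ ψ : ℝ → ℝ} {σ V I ρ' ψ' z : ℝ}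
    (hρ : HasDerivAt ρ ρ' z) (hψ : HasDerivAt ψ ψ' z) (hρz : ρ z ≠ 0)
    (heq : σ * ρ' + ψ' * ρ z + V * ρ z = I) :
    HasDerivAt (fun x => σ * Real.log (ρ x) + ψ x + V * x) (I / ρ z) z := by
  have h : HasDerivAt (fun x => σ * Real.log (ρ x) + ψ x + V * x)
      (σ * (ρ' / ρ z) + ψ' + V) z :=
    (((hρ.log hρz).const_mul σ).add hψ).add
      (((hasDerivAt_id' z).const_mul V).congr_deriv (mul_one V))
  convert h using 1
  field_simp
  linarith

theorem mul_integral_inv_density_eq {ρ ψ : ℝ → ℝ} {σ V I : ℝ}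
    (hρ : Differentiable ℝ ρ) (hψ : Differentiable ℝ ψ) (hρpos : ∀ x, 0 < ρ x)
    (heq : ∀ z, σ * deriv ρ z + deriv ψ z * ρ z + V * ρ z = I) (a b : ℝ) :
    I * ∫ z in a..b, (ρ z)⁻¹ =
      σ * (Real.log (ρ b) - Real.log (ρ a)) + (ψ b - ψ a) + V * (b - a) := by
  have hinv : Continuous fun z => (ρ z)⁻¹ := hρ.continuous.inv₀ fun z => (hρpos z).ne'
  have hderiv (z : ℝ) :
      HasDerivAt (fun x => σ * Real.log (ρ x) + ψ x + V * x) (I * (ρ z)⁻¹) z := by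
    simpa only [div_eq_mul_inv] using hasDerivAt_log_density_add_potential
      (hρ z).hasDerivAt (hψ z).hasDerivAt (hρpos z).ne' (heq z)
  rw [← intervalIntegral.integral_const_mul, integral_eq_sub_of_hasDerivAt (fun z _ => hderiv z)
    ((continuous_const.mul hinv).intervalIntegrable a b)]
  ring

theorem one_le_integral_inv_of_integral_eq_one {f : ℝ → ℝ}
    (hf : ContinuousOn f (Set.Icc 0 1)) (hpos : ∀ x ∈ Set.Icc (0 : ℝ) 1, 0 < f x)
    (hnorm : ∫ x in (0 : ℝ)..1, f x = 1) :
    1 ≤ ∫ x in (0 : ℝ)..1, (f x)⁻¹ := by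
  have hf' : IntervalIntegrable f volume 0 1 :=
    hf.intervalIntegrable_of_Icc zero_le_one
  have hinv : IntervalIntegrable (fun x => (f x)⁻¹) volume 0 1 :=
    (hf.inv₀ fun x hx => (hpos x hx).ne').intervalIntegrable_of_Icc zero_le_one
  calc (1 : ℝ) = ∫ x in (0 : ℝ)..1, (2 - f x) := by
        rw [integral_sub intervalIntegrable_const hf', hnorm]
        norm_num
    _ ≤ ∫ x in (0 : ℝ)..1, (f x)⁻¹ := by
        refine integral_mono_on zero_le_one (intervalIntegrable_const.sub hf') hinv fun x hx => ?_
        have hx := hpos x hx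
        rw [inv_eq_one_div, le_div_iff₀ hx]
        nlinarith [sq_nonneg (f x - 1)]

theorem stmt3_general (σ V I : ℝ) (ψ : ℝ → ℝ)
    (hψ : ContDiff ℝ 1 ψ) (hψper : ∀ x, ψ (x + 1) = ψ x)
    (ρ : ℝ → ℝ) (hρ : ContDiff ℝ 1 ρ) (hρpos : ∀ x, 0 < ρ x)
    (hρper : ∀ x, ρ (x + 1) = ρ x)
    (hnorm : (∫ z in (0:ℝ)..1, ρ z) = 1)
    (heq : ∀ z, σ * deriv ρ z + deriv ψ z * ρ z + V * ρ z = I)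
    (κ : ℝ) (hκ : κ = V - I) :
    κ = V * (1 - 1 / ∫ z in (0:ℝ)..1, (ρ z)⁻¹) ∧ |κ| ≤ |V| ∧ 0 ≤ κ * V := by
  set J := ∫ z in (0:ℝ)..1, (ρ z)⁻¹
  have hIJ : I * J = V := by
    have h := mul_integral_inv_density_eq (hρ.differentiable one_ne_zero)
      (hψ.differentiable one_ne_zero) hρpos heq 0 (0 + 1)
    rw [hρper, hψper, sub_self, sub_self, zero_add] at h
    linarith
  have hJ : 1 ≤ J := one_le_integral_inv_of_integral_eq_one hρ.continuous.continuousOn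
    (fun x _ => hρpos x) hnorm
  have hκJ : κ = V * (1 - 1 / J) := by
    rw [hκ, ← hIJ]
    field_simp
  have hfactor : 0 ≤ 1 - 1 / J ∧ 1 - 1 / J ≤ 1 := by
    constructor
    · rw [sub_nonneg, div_le_one (by linarith)]; exact hJ
    · linarith [one_div_pos.mpr (show 0 < J by linarith)]
  refine ⟨hκJ, ?_, ?_⟩
  · rw [hκJ, abs_mul, abs_of_nonneg hfactor.1]
    exact mul_le_of_le_one_right (abs_nonneg V) hfactor.2
  · rw [hκJ, mul_right_comm]
    exact mul_nonneg (mul_self_nonneg V) hfactor.1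

/-- Properties of the mean velocity `κ = V - I` of the diffusion-induced
transport: `κ = V (1 - 1/∫₀¹ ρ̄⁻¹)`, `|κ| ≤ |V|`, and `κ` has the sign of `V`. -/
theorem stmt3 (σ V I : ℝ) (hσ : 0 < σ) (ψ : ℝ → ℝ)
    (hψ : ContDiff ℝ 1 ψ) (hψper : ∀ x, ψ (x + 1) = ψ x)
    (ρ : ℝ → ℝ) (hρ : ContDiff ℝ 1 ρ) (hρpos : ∀ x, 0 < ρ x)
    (hρper : ∀ x, ρ (x + 1) = ρ x)
    (hnorm : (∫ z in (0:ℝ)..1, ρ z) = 1)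
    (heq : ∀ z, σ * deriv ρ z + deriv ψ z * ρ z + V * ρ z = I)
    (κ : ℝ) (hκ : κ = V - I) :
    κ = V * (1 - 1 / ∫ z in (0:ℝ)..1, (ρ z)⁻¹) ∧ |κ| ≤ |V| ∧ 0 ≤ κ * V :=
  stmt3_general σ V I ψ hψ hψper ρ hρ hρpos hρper hnorm heq κ hκ
end

section
/- Let σ > 0, V ∈ ℝ, and ψ : ℝ → ℝ continuous and 1-periodic. Define f₊(z) = exp((Vz + ψ(z))/σ), f₋(z) = exp(−(Vz + ψ(z))/σ), F₊(z) = ∫₀ᶻ f₊(s) ds, F₋(z) = ∫₀ᶻ f₋(s) ds, H₊ = ∫₀¹ f₋(z) F₊(z) dz, and H₋ = ∫₀¹ f₊(z) F₋(z) dz. Define h₊(z) = ∫_z^1 exp(σ⁻¹(ψ(x−z) − ψ(x))) dx for z ∈ [0,1] and h₊(z) = 0 otherwise, and h₋(z) = ∫_{−z}^1 exp(σ⁻¹(ψ(x) − ψ(x+z))) dx for z ∈ [−1,0] and h₋(z) = 0 otherwise. Then H₊ = ∫_ℝ e^(−Vz/σ) h₊(z) dz and H₋ = ∫_ℝ e^(−Vz/σ)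 h₋(z) dz. -/
open MeasureTheory intervalIntegral Real

/-!
Substituting `s = z - u` in the inner integral turns `H₊` into the integral of
`e^{-Vu/σ} e^{(ψ(z-u) - ψ(z))/σ}` over the triangle `0 ≤ u ≤ z ≤ 1`.
Fubini on the triangle puts the `u`-integral outside, and the inner `z`-integral is `h₊(u)`.
The same substitution writes `H₋` as `∫₀¹ e^{Vu/σ} h₋(-u) du`, and the reflection `u ↦ -u`
finishes.
-/

open Set Function

def lowerTriangle (a b : ℝ) : Set (ℝ × ℝ) := {p | a ≤ p.2 ∧ p.2 ≤ p.1 ∧ p.1 ≤ b}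

theorem isClosed_lowerTriangle (a b : ℝ) : IsClosed (lowerTriangle a b) :=
  (isClosed_le continuous_const continuous_snd).inter
    ((isClosed_le continuous_snd continuous_fst).inter
      (isClosed_le continuous_fst continuous_const))

theorem lowerTriangle_subset_Icc (a b : ℝ) : lowerTriangle a b ⊆ Icc (a, a) (b, b) :=
  fun _ ⟨h1, h2, h3⟩ => ⟨⟨h1.trans h2, h1⟩, ⟨h3, h2.trans h3⟩⟩

section TriangleFubini

variable {E : Type*} [NormedAddCommGroup E] [NormedSpace ℝ E] {a b : ℝ}

theorem integral_indicator_lowerTriangle_fst (K : ℝ → ℝ → E) (z : ℝ) :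
    ∫ u, (lowerTriangle a b).indicator (uncurry K) (z, u) =
      (Icc a b).indicator (fun z => ∫ u in a..z, K z u) z := by
  by_cases hz : z ∈ Icc a b
  · have hsection : (fun u => (lowerTriangle a b).indicator (uncurry K) (z, u)) =
        (Icc a z).indicator (K z) := by
      ext u
      simp only [lowerTriangle, indicator_apply, mem_ofPred_eq, mem_Icc, uncurry_apply_pair]
      grind
    rw [hsection, MeasureTheory.integral_indicator measurableSet_Icc,
      integral_Icc_eq_integral_Ioc, ← integral_of_le hz.1, indicator_of_mem hz]
  · have hsection : ∀ u, (lowerTriangle a b).indicator (uncurry K) (z, u) = 0 := fun _ =>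
      indicator_of_notMem (fun h => hz ⟨h.1.trans h.2.1, h.2.2⟩) _
    simp [hsection, indicator_of_notMem hz]

theorem integral_indicator_lowerTriangle_snd (K : ℝ → ℝ → E) (u : ℝ) :
    ∫ z, (lowerTriangle a b).indicator (uncurry K) (z, u) =
      (Icc a b).indicator (fun u => ∫ z in u..b, K z u) u := by
  by_cases hu : u ∈ Icc a b
  · have hsection : (fun z => (lowerTriangle a b).indicator (uncurry K) (z, u)) =
        (Icc u b).indicator (K · u) := by
      ext z
      simp only [lowerTriangle, indicator_apply, mem_ofPred_eq, mem_Icc, uncurry_apply_pair]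
      grind
    rw [hsection, MeasureTheory.integral_indicator measurableSet_Icc,
      integral_Icc_eq_integral_Ioc, ← integral_of_le hu.2, indicator_of_mem hu]
  · have hsection : ∀ z, (lowerTriangle a b).indicator (uncurry K) (z, u) = 0 := fun _ =>
      indicator_of_notMem (fun h => hu ⟨h.1, h.2.1.trans h.2.2⟩) _
    simp [hsection, indicator_of_notMem hu]

theorem integral_integral_triangle_swap {K : ℝ → ℝ → E} (hK : Continuous (uncurry K))
    (hab : a ≤ b) :
    ∫ z in a..b, ∫ u in a..z, K z u = ∫ u in a..b, ∫ z in u..b, K z u := by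
  have hint : Integrable ((lowerTriangle a b).indicator (uncurry K)) (volume.prod volume) :=
    ((hK.continuousOn.integrableOn_compact isCompact_Icc).mono_set
      (lowerTriangle_subset_Icc a b)).integrable_indicator
      (isClosed_lowerTriangle a b).measurableSet
  calc ∫ z in a..b, ∫ u in a..z, K z u
      = ∫ z, ∫ u, (lowerTriangle a b).indicator (uncurry K) (z, u) := by
        simp only [integral_indicator_lowerTriangle_fst,
          MeasureTheory.integral_indicator measurableSet_Icc, integral_Icc_eq_integral_Ioc,
          integral_of_le hab]
    _ = ∫ u, ∫ z, (lowerTriangle a b).indicator (uncurry K) (z, u) :=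
        integral_integral_swap hint
    _ = ∫ u in a..b, ∫ z in u..b, K z u := by
        simp only [integral_indicator_lowerTriangle_snd,
          MeasureTheory.integral_indicator measurableSet_Icc, integral_Icc_eq_integral_Ioc,
          integral_of_le hab]

theorem integral_eq_intervalIntegral_of_eq_zero {F : ℝ → E} (hab : a ≤ b)
    (hF : ∀ z ∉ Icc a b, F z = 0) : ∫ z, F z = ∫ z in a..b, F z := by
  rw [integral_of_le hab, ← integral_Icc_eq_integral_Ioc,
    setIntegral_eq_integral_of_forall_compl_eq_zero hF]

end TriangleFubini

theorem integral_mul_integral_eq_integral_integral_sub {f g : ℝ → ℝ} (hf : Continuous f)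
    (hg : Continuous g) {b : ℝ} (hb : 0 ≤ b) :
    ∫ z in 0..b, f z * ∫ s in 0..z, g s = ∫ u in 0..b, ∫ z in u..b, f z * g (z - u) := by
  have hconv : ∀ z, ∫ s in 0..z, g s = ∫ u in 0..z, g (z - u) := fun z => by
    rw [integral_comp_sub_left, sub_self, sub_zero]
  simp only [hconv, ← intervalIntegral.integral_const_mul]
  exact integral_integral_triangle_swap (K := fun z u => f z * g (z - u))
    (hf.fst'.mul (hg.comp (continuous_fst.sub continuous_snd))) hb

theorem stmt8_general (σ V : ℝ) (ψ : ℝ → ℝ)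
    (hψ : Continuous ψ)
    (fp fm Fp Fm : ℝ → ℝ) (Hp Hm : ℝ) (hp hm : ℝ → ℝ)
    (hfp : ∀ z, fp z = Real.exp ((V * z + ψ z) / σ))
    (hfm : ∀ z, fm z = Real.exp (-(V * z + ψ z) / σ))
    (hFp : ∀ z, Fp z = ∫ s in (0:ℝ)..z, fp s)
    (hFm : ∀ z, Fm z = ∫ s in (0:ℝ)..z, fm s)
    (hHp : Hp = ∫ z in (0:ℝ)..1, fm z * Fp z)
    (hHm : Hm = ∫ z in (0:ℝ)..1, fp z * Fm z)
    (hhp : ∀ z, hp z = if z ∈ Set.Icc (0:ℝ) 1 then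
      ∫ x in z..1, Real.exp (σ⁻¹ * (ψ (x - z) - ψ x)) else 0)
    (hhm : ∀ z, hm z = if z ∈ Set.Icc (-1:ℝ) 0 then
      ∫ x in (-z)..1, Real.exp (σ⁻¹ * (ψ x - ψ (x + z))) else 0) :
    Hp = ∫ z : ℝ, Real.exp (-(V * z) / σ) * hp z ∧
    Hm = ∫ z : ℝ, Real.exp (-(V * z) / σ) * hm z := by
  have hfp_cont : Continuous fp := by rw [funext hfp]; fun_prop
  have hfm_cont : Continuous fm := by rw [funext hfm]; fun_prop
  constructor
  · calc Hp = ∫ u in (0:ℝ)..1, ∫ z in u..1, fm z * fp (z - u) := by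
          simp only [hHp, hFp,
            integral_mul_integral_eq_integral_integral_sub hfm_cont hfp_cont zero_le_one]
      _ = ∫ u in (0:ℝ)..1, Real.exp (-(V * u) / σ) * hp u := by
          refine integral_congr fun u hu => ?_
          rw [uIcc_of_le zero_le_one] at hu
          rw [hhp, if_pos hu, ← intervalIntegral.integral_const_mul]
          refine integral_congr fun z _ => ?_
          rw [hfm, hfp, ← exp_add, ← exp_add]
          ring_nf
      _ = ∫ z : ℝ, Real.exp (-(V * z) / σ) * hp z :=
          (integral_eq_intervalIntegral_of_eq_zero zero_le_one fun z hz => by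
            rw [hhp, if_neg hz, mul_zero]).symm
  · calc Hm = ∫ w in (0:ℝ)..1, ∫ z in w..1, fp z * fm (z - w) := by
          simp only [hHm, hFm,
            integral_mul_integral_eq_integral_integral_sub hfp_cont hfm_cont zero_le_one]
      _ = ∫ w in (0:ℝ)..1, Real.exp (-(V * -w) / σ) * hm (-w) := by
          refine integral_congr fun w hw => ?_
          rw [uIcc_of_le zero_le_one] at hw
          have hw' : -w ∈ Icc (-1:ℝ) 0 := ⟨neg_le_neg hw.2, neg_nonpos.2 hw.1⟩
          rw [hhm, if_pos hw', neg_neg, ← intervalIntegral.integral_const_mul]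
          refine integral_congr fun z _ => ?_
          rw [hfm, hfp, ← exp_add, ← exp_add, ← sub_eq_add_neg]
          ring_nf
      _ = ∫ w : ℝ, Real.exp (-(V * -w) / σ) * hm (-w) :=
          (integral_eq_intervalIntegral_of_eq_zero zero_le_one fun w hw => by
            have hw' : -w ∉ Icc (-1:ℝ) 0 := fun h =>
              hw ⟨neg_nonpos.1 h.2, neg_le_neg_iff.1 h.1⟩
            rw [hhm, if_neg hw', mul_zero]).symm
      _ = ∫ z : ℝ, Real.exp (-(V * z) / σ) * hm z :=
          integral_neg_eq_self (fun z => Real.exp (-(V * z) / σ) * hm z) volume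

/-- The quantities `H₊` and `H₋` are Laplace transforms (in the variable `V/σ`)
of the compactly supported kernels `h₊` and `h₋`. -/
theorem stmt8 (σ V : ℝ) (hσ : 0 < σ) (ψ : ℝ → ℝ)
    (hψ : Continuous ψ) (hψper : ∀ x, ψ (x + 1) = ψ x)
    (fp fm Fp Fm : ℝ → ℝ) (Hp Hm : ℝ) (hp hm : ℝ → ℝ)
    (hfp : ∀ z, fp z = Real.exp ((V * z + ψ z) / σ))
    (hfm : ∀ z, fm z = Real.exp (-(V * z + ψ z) / σ))
    (hFp : ∀ z, Fp z = ∫ s in (0:ℝ)..z, fp s)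
    (hFm : ∀ z, Fm z = ∫ s in (0:ℝ)..z, fm s)
    (hHp : Hp = ∫ z in (0:ℝ)..1, fm z * Fp z)
    (hHm : Hm = ∫ z in (0:ℝ)..1, fp z * Fm z)
    (hhp : ∀ z, hp z = if z ∈ Set.Icc (0:ℝ) 1 then
      ∫ x in z..1, Real.exp (σ⁻¹ * (ψ (x - z) - ψ x)) else 0)
    (hhm : ∀ z, hm z = if z ∈ Set.Icc (-1:ℝ) 0 then
      ∫ x in (-z)..1, Real.exp (σ⁻¹ * (ψ x - ψ (x + z))) else 0) :
    Hp = ∫ z : ℝ, Real.exp (-(V * z) / σ) * hp z ∧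
    Hm = ∫ z : ℝ, Real.exp (-(V * z) / σ) * hm z :=
  stmt8_general σ V ψ hψ fp fm Fp Fm Hp Hm hp hm hfp hfm hFp hFm hHp hHm hhp hhm
end

section
/- Let σ > 0, V ∈ ℝ, and ψ : ℝ → ℝ continuous and 1-periodic. Define f₊(z) = exp((Vz + ψ(z))/σ), f₋(z) = exp(−(Vz + ψ(z))/σ), F₊(z) = ∫₀ᶻ f₊(s) ds, F₋(z) = ∫₀ᶻ f₋(s) ds, H₊ = ∫₀¹ f₋(z) F₊(z) dz, and H₋ = ∫₀¹ f₊(z) F₋(z) dz. Then ∫_{−1}^0 e^(−Vz/σ) (∫₀¹ exp(σ⁻¹(ψ(x) − ψ(x+z))) dx) dz = e^(V/σ) H₊ + H₋. In particular, if I = (1 − e^(−V/σ))/(H₊ + e^(−V/σ) H₋) denotes the response current and V ≠ 0, then ∫_{−1}^0 e^(−Vz/σ) (∫₀¹ exp(σ⁻¹(ψ(x) − ψ(x+z))) dx) dz = (e^(V/σ) − 1)/I. -/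
open MeasureTheory intervalIntegral Real

/-!
With `f₊ = exp((V z + ψ z)/σ)` and `f₋ = exp(-(V z + ψ z)/σ)`, the integrand factors as
`e^{-Vz/σ} exp(σ⁻¹(ψ x - ψ(x+z))) = f₊ x * f₋ (x + z)`. After Fubini the inner integral is
`∫_{x-1}^x f₋`, and periodicity of `ψ` makes `f₋` quasi-periodic, `f₋ (t - 1) = e^{V/σ} f₋ t`, which
expresses it through `F₋ x` and `F₋ 1`. Integrating against `f₊` and using the integration by parts
identity `H₊ + H₋ = F₊ 1 * F₋ 1` gives `e^{V/σ} H₊ + H₋`.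
-/

theorem intervalIntegral_intervalIntegral_swap_of_continuous {E : Type*} [NormedAddCommGroup E]
    [NormedSpace ℝ E] [CompleteSpace E] {F : ℝ → ℝ → E} (hF : Continuous F.uncurry)
    (a b c d : ℝ) :
    ∫ x in a..b, ∫ y in c..d, F x y = ∫ y in c..d, ∫ x in a..b, F x y := by
  refine intervalIntegral_intervalIntegral_swap ?_
  have hcompact : IsCompact (Set.uIcc a b ×ˢ Set.uIcc c d) := isCompact_uIcc.prod isCompact_uIcc
  exact (hF.continuousOn.integrableOn_compact hcompact).mono_set
    (Set.prod_mono Set.uIoc_subset_uIcc Set.uIoc_subset_uIcc)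

theorem integral_mul_primitive_add_integral_mul_primitive {f g : ℝ → ℝ} (hf : Continuous f)
    (hg : Continuous g) (a b : ℝ) :
    (∫ x in a..b, f x * ∫ s in a..x, g s) + ∫ x in a..b, g x * ∫ s in a..x, f s =
      (∫ x in a..b, f x) * ∫ x in a..b, g x := by
  have hF : Continuous fun x => ∫ s in a..x, f s := continuous_primitive hf.intervalIntegrable a
  have hG : Continuous fun x => ∫ s in a..x, g s := continuous_primitive hg.intervalIntegrable a
  have hparts := integral_deriv_mul_eq_sub
    (fun x _ => (hf.integral_hasStrictDerivAt a x).hasDerivAt)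
    (fun x _ => (hg.integral_hasStrictDerivAt a x).hasDerivAt)
    (hf.intervalIntegrable a b) (hg.intervalIntegrable a b)
  simp only [integral_same, mul_zero, sub_zero] at hparts
  have hfG : IntervalIntegrable (fun x => f x * ∫ s in a..x, g s) volume a b :=
    (hf.mul hG).intervalIntegrable a b
  have hgF : IntervalIntegrable (fun x => g x * ∫ s in a..x, f s) volume a b :=
    (hg.mul hF).intervalIntegrable a b
  rw [← hparts, ← intervalIntegral.integral_add hfG hgF]
  exact intervalIntegral.integral_congr fun x _ => by simp only [mul_comm (g x)]

theorem integral_comp_add_of_quasiPeriodic {g : ℝ → ℝ} {p c : ℝ} (hg : Continuous g)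
    (hgp : ∀ t, g (t - p) = c * g t) (x : ℝ) :
    ∫ z in -p..0, g (x + z) = (1 - c) * (∫ s in 0..x, g s) + c * ∫ s in 0..p, g s := by
  have hint : ∀ a b, IntervalIntegrable g volume a b := hg.intervalIntegrable
  have hshift : ∫ s in 0..x - p, g s = c * ((∫ s in 0..x, g s) - ∫ s in 0..p, g s) := by
    rw [integral_interval_sub_left (hint 0 x) (hint 0 p), ← intervalIntegral.integral_const_mul,
      ← intervalIntegral.integral_congr fun t _ => hgp t, integral_comp_sub_right, sub_self]
  rw [integral_comp_add_left, add_zero, ← sub_eq_add_neg,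
    ← integral_interval_sub_left (hint 0 x) (hint 0 (x - p)), hshift]
  ring

theorem integral_integral_mul_comp_add_of_quasiPeriodic {f g : ℝ → ℝ} {c : ℝ} (hf : Continuous f)
    (hg : Continuous g) (hgp : ∀ t, g (t - 1) = c * g t) :
    ∫ z in (-1:ℝ)..0, ∫ x in (0:ℝ)..1, f x * g (x + z) =
      c * (∫ x in (0:ℝ)..1, g x * ∫ s in (0:ℝ)..x, f s) +
        ∫ x in (0:ℝ)..1, f x * ∫ s in (0:ℝ)..x, g s := by
  set G := fun x => ∫ s in (0:ℝ)..x, g s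
  have hfG : IntervalIntegrable (fun x => f x * G x) volume 0 1 :=
    (hf.mul (continuous_primitive hg.intervalIntegrable 0)).intervalIntegrable 0 1
  have hparts := integral_mul_primitive_add_integral_mul_primitive hg hf 0 1
  calc _ = ∫ x in (0:ℝ)..1, f x * ∫ z in (-1:ℝ)..0, g (x + z) := by
        rw [intervalIntegral_intervalIntegral_swap_of_continuous (by fun_prop)]
        simp_rw [intervalIntegral.integral_const_mul]
    _ = ∫ x in (0:ℝ)..1, (1 - c) * (f x * G x) + c * G 1 * f x :=
        intervalIntegral.integral_congr fun x _ => by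
          rw [integral_comp_add_of_quasiPeriodic hg hgp]; ring
    _ = (1 - c) * (∫ x in (0:ℝ)..1, f x * G x) + c * G 1 * ∫ x in (0:ℝ)..1, f x := by
        rw [intervalIntegral.integral_add (hfG.const_mul _)
          ((hf.intervalIntegrable 0 1).const_mul _), intervalIntegral.integral_const_mul,
          intervalIntegral.integral_const_mul]
    _ = _ := by linear_combination c * hparts.symm

/-- Key identity for the inverse problem: the Laplace transform in `V/σ` of
`z ↦ 𝟙_{[-1,0]}(z) ∫₀¹ exp(σ⁻¹(ψ(x)-ψ(x+z))) dx` equals `e^{V/σ} H₊ + H₋`,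
that is, `(e^{V/σ} - 1)/I(V,σ)` where `I` is the response current. -/
theorem stmt10 (σ V : ℝ) (hσ : 0 < σ) (ψ : ℝ → ℝ)
    (hψ : Continuous ψ) (hψper : ∀ x, ψ (x + 1) = ψ x)
    (fp fm Fp Fm : ℝ → ℝ) (Hp Hm : ℝ)
    (hfp : ∀ z, fp z = Real.exp ((V * z + ψ z) / σ))
    (hfm : ∀ z, fm z = Real.exp (-(V * z + ψ z) / σ))
    (hFp : ∀ z, Fp z = ∫ s in (0:ℝ)..z, fp s)
    (hFm : ∀ z, Fm z = ∫ s in (0:ℝ)..z, fm s)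
    (hHp : Hp = ∫ z in (0:ℝ)..1, fm z * Fp z)
    (hHm : Hm = ∫ z in (0:ℝ)..1, fp z * Fm z) :
    (∫ z in (-1:ℝ)..0, Real.exp (-(V * z) / σ) *
        ∫ x in (0:ℝ)..1, Real.exp (σ⁻¹ * (ψ x - ψ (x + z)))) =
      Real.exp (V / σ) * Hp + Hm ∧
    ∀ I : ℝ, I = (1 - Real.exp (-V / σ)) / (Hp + Real.exp (-V / σ) * Hm) →
      V ≠ 0 →
      (∫ z in (-1:ℝ)..0, Real.exp (-(V * z) / σ) *
          ∫ x in (0:ℝ)..1, Real.exp (σ⁻¹ * (ψ x - ψ (x + z)))) =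
        (Real.exp (V / σ) - 1) / I := by
  set e := Real.exp (V / σ)
  have hfp_cont : Continuous fp := by rw [funext hfp]; fun_prop
  have hfm_cont : Continuous fm := by rw [funext hfm]; fun_prop
  have hfm_shift : ∀ t, fm (t - 1) = e * fm t := fun t => by
    rw [hfm, hfm, ← hψper (t - 1), sub_add_cancel, ← exp_add]; ring_nf
  have hfactor : ∀ z x, exp (-(V * z) / σ) * exp (σ⁻¹ * (ψ x - ψ (x + z))) = fp x * fm (x + z) :=
    fun z x => by rw [hfp, hfm, ← exp_add, ← exp_add]; ring_nf
  have hlaplace : (∫ z in (-1:ℝ)..0, exp (-(V * z) / σ) *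
      ∫ x in (0:ℝ)..1, exp (σ⁻¹ * (ψ x - ψ (x + z)))) = e * Hp + Hm := by
    simp_rw [← intervalIntegral.integral_const_mul, hfactor, hHp, hHm, hFp, hFm]
    exact integral_integral_mul_comp_add_of_quasiPeriodic hfp_cont hfm_cont hfm_shift
  refine ⟨hlaplace, fun I hI hV => ?_⟩
  have he1 : e ≠ 1 := fun h => hV (by simpa [hσ.ne'] using exp_eq_one_iff _ |>.mp h)
  rw [hlaplace, hI, neg_div, exp_neg, div_div_eq_mul_div, eq_div_iff]
  · field_simp
    ring
  · exact sub_ne_zero.mpr (inv_ne_one.mpr he1).symm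
end

section
/- Let σ > 0 and ψ : ℝ → ℝ continuous and 1-periodic. For V ∈ ℝ define f₊(z) = exp((Vz + ψ(z))/σ), f₋(z) = exp(−(Vz + ψ(z))/σ), F₊(z) = ∫₀ᶻ f₊(s) ds, F₋(z) = ∫₀ᶻ f₋(s) ds, H₊(V) = ∫₀¹ f₋(z) F₊(z) dz, H₋(V) = ∫₀¹ f₊(z) F₋(z) dz, and for V ≠ 0 the response current I(V) = (1 − e^(−V/σ))/(H₊(V) + e^(−V/σ) H₋(V)). Then lim_{V → 0, V ≠ 0} (e^(V/σ) − 1)/I(V) = ∫_{−1}^0 ∫₀¹ exp(σ⁻¹(ψ(x) − ψ(x+z))) dx dz. Equivalently, the function V ↦ I(V), extended by I(0) = 0, is differentiable at V = 0 with derivative (dI/dV)(0) = 1/(σ · ∫_{−1}^0 ∫₀¹ exp(σ⁻¹(ψ(x) − ψ(x+z))) dx dz). -/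
open MeasureTheory intervalIntegral Real Filter Topology

/-! Multiplying numerator and denominator by `e^{V/σ}` gives `I(V) = (e^{V/σ} - 1) / R(V)` with
`R(V) = e^{V/σ} H₊(V) + H₋(V)`, which is continuous in `V`. At `V = 0` the product rule for the
primitives gives `R(0) = (∫₀¹ e^{ψ/σ}) (∫₀¹ e^{-ψ/σ})`, and Fubini together with the periodicity
of `ψ` shows that the double integral has the same value. This value is positive, so both
claims follow from the continuity of `R` at `0`. -/

theorem HasDerivAt.mul_continuousAt_of_eq_zero {𝕜 : Type*} [NontriviallyNormedField 𝕜]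
    {f g : 𝕜 → 𝕜} {f' x : 𝕜} (hf : HasDerivAt f f' x) (hfx : f x = 0)
    (hg : ContinuousAt g x) : HasDerivAt (fun y => f y * g y) (f' * g x) x := by
  rw [hasDerivAt_iff_tendsto_slope] at hf ⊢
  refine (hf.mul (hg.tendsto.mono_left nhdsWithin_le_nhds)).congr fun y => ?_
  simp only [slope_def_field, hfx, zero_mul, sub_zero]
  ring

theorem integral_mul_primitive_add_mul_primitive {a b : ℝ → ℝ} (ha : Continuous a)
    (hb : Continuous b) (T : ℝ) :
    (∫ z in (0:ℝ)..T, b z * ∫ s in (0:ℝ)..z, a s) +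
        ∫ z in (0:ℝ)..T, a z * ∫ s in (0:ℝ)..z, b s =
      (∫ x in (0:ℝ)..T, a x) * ∫ x in (0:ℝ)..T, b x := by
  have hA := ha.integral_hasStrictDerivAt 0
  have hB := hb.integral_hasStrictDerivAt 0
  have hAc : Continuous fun z => ∫ s in (0:ℝ)..z, a s :=
    continuous_iff_continuousAt.2 fun z => (hA z).hasDerivAt.continuousAt
  have hBc : Continuous fun z => ∫ s in (0:ℝ)..z, b s :=
    continuous_iff_continuousAt.2 fun z => (hB z).hasDerivAt.continuousAt
  have hparts := integral_deriv_mul_eq_sub (a := 0) (b := T)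
    (fun z _ => (hA z).hasDerivAt) (fun z _ => (hB z).hasDerivAt)
    (ha.intervalIntegrable 0 T) (hb.intervalIntegrable 0 T)
  rw [integral_same, zero_mul, sub_zero] at hparts
  rw [← hparts, integral_add (f := fun z => a z * ∫ s in (0:ℝ)..z, b s)
    (g := fun z => (∫ s in (0:ℝ)..z, a s) * b z)
    ((ha.mul hBc).intervalIntegrable 0 T) ((hAc.mul hb).intervalIntegrable 0 T), add_comm]
  simp only [mul_comm]

theorem integral_integral_mul_comp_add_of_periodic {a b : ℝ → ℝ} (ha : Continuous a)
    (hb : Continuous b) {T : ℝ} (hbT : Function.Periodic b T) :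
    ∫ z in (-T)..0, ∫ x in (0:ℝ)..T, a x * b (x + z) =
      (∫ x in (0:ℝ)..T, a x) * ∫ x in (0:ℝ)..T, b x := by
  have hint : IntegrableOn (fun p : ℝ × ℝ => a p.2 * b (p.2 + p.1))
      (Set.uIoc (-T) 0 ×ˢ Set.uIoc 0 T) :=
    (by fun_prop : Continuous fun p : ℝ × ℝ => a p.2 * b (p.2 + p.1)).continuousOn
      |>.integrableOn_compact (isCompact_uIcc.prod isCompact_uIcc)
      |>.mono_set (Set.prod_mono Set.uIoc_subset_uIcc Set.uIoc_subset_uIcc)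
  have hperiod : ∀ x, ∫ z in (-T)..0, b (x + z) = ∫ x in (0:ℝ)..T, b x := fun x => by
    rw [integral_comp_add_left, show x + 0 = x + -T + T by ring,
      hbT.intervalIntegral_add_eq (x + -T) 0, zero_add]
  rw [intervalIntegral_intervalIntegral_swap (F := fun z x => a x * b (x + z)) hint]
  simp only [intervalIntegral.integral_const_mul, hperiod, intervalIntegral.integral_mul_const]

theorem integral_integral_exp_sub_comp_add_eq_mul {ψ : ℝ → ℝ} (hψ : Continuous ψ)
    (hψper : Function.Periodic ψ 1) (σ : ℝ) :
    ∫ z in (-1:ℝ)..0, ∫ x in (0:ℝ)..1, Real.exp (σ⁻¹ * (ψ x - ψ (x + z))) =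
      (∫ x in (0:ℝ)..1, Real.exp (ψ x / σ)) * ∫ x in (0:ℝ)..1, Real.exp (-ψ x / σ) := by
  have hper : Function.Periodic (fun x => Real.exp (-ψ x / σ)) 1 := fun x => by
    simp only [hψper x]
  rw [← integral_integral_mul_comp_add_of_periodic (by fun_prop) (by fun_prop) hper]
  refine integral_congr fun z _ => integral_congr fun x _ => ?_
  simp only [← Real.exp_add]
  ring_nf

theorem one_sub_exp_neg_div_add_exp_neg_mul (x a b : ℝ) :
    (1 - Real.exp (-x)) / (a + Real.exp (-x) * b) = (Real.exp x - 1) / (Real.exp x * a + b) := by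
  have hx : Real.exp x * Real.exp (-x) = 1 := by rw [← Real.exp_add, add_neg_cancel, Real.exp_zero]
  rw [← mul_div_mul_left _ _ (Real.exp_ne_zero x), mul_sub, mul_add, ← mul_assoc, hx, mul_one,
    one_mul]

/-- The zero-voltage resistance: `lim_{V→0} (e^{V/σ}-1)/I(V)` equals the
double integral `∫_{-1}^0 ∫₀¹ exp(σ⁻¹(ψ(x)-ψ(x+z))) dx dz`; equivalently, the
response current `I`, extended by `I(0) = 0`, is differentiable at `V = 0`
with derivative `(σ ∫_{-1}^0 ∫₀¹ exp(σ⁻¹(ψ(x)-ψ(x+z))) dx dz)⁻¹`. -/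
theorem stmt11 (σ : ℝ) (hσ : 0 < σ) (ψ : ℝ → ℝ)
    (hψ : Continuous ψ) (hψper : ∀ x, ψ (x + 1) = ψ x)
    (Icur : ℝ → ℝ)
    (hI : ∀ V : ℝ, V ≠ 0 → Icur V =
      (1 - Real.exp (-V / σ)) /
        ((∫ z in (0:ℝ)..1, Real.exp (-(V * z + ψ z) / σ) *
            ∫ s in (0:ℝ)..z, Real.exp ((V * s + ψ s) / σ)) +
          Real.exp (-V / σ) *
            ∫ z in (0:ℝ)..1, Real.exp ((V * z + ψ z) / σ) *
              ∫ s in (0:ℝ)..z, Real.exp (-(V * s + ψ s) / σ)))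
    (hI0 : Icur 0 = 0) :
    Tendsto (fun V : ℝ => (Real.exp (V / σ) - 1) / Icur V)
        (𝓝[≠] 0)
        (𝓝 (∫ z in (-1:ℝ)..0, ∫ x in (0:ℝ)..1,
          Real.exp (σ⁻¹ * (ψ x - ψ (x + z))))) ∧
    HasDerivAt Icur
      (1 / (σ * ∫ z in (-1:ℝ)..0, ∫ x in (0:ℝ)..1,
        Real.exp (σ⁻¹ * (ψ x - ψ (x + z))))) 0 := by
  set D := ∫ z in (-1:ℝ)..0, ∫ x in (0:ℝ)..1, Real.exp (σ⁻¹ * (ψ x - ψ (x + z)))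
  set R : ℝ → ℝ := fun V => Real.exp (V / σ) *
      (∫ z in (0:ℝ)..1, Real.exp (-(V * z + ψ z) / σ) *
        ∫ s in (0:ℝ)..z, Real.exp ((V * s + ψ s) / σ)) +
    ∫ z in (0:ℝ)..1, Real.exp ((V * z + ψ z) / σ) *
      ∫ s in (0:ℝ)..z, Real.exp (-(V * s + ψ s) / σ) with hR
  have hDfac : D = (∫ x in (0:ℝ)..1, Real.exp (ψ x / σ)) *
      ∫ x in (0:ℝ)..1, Real.exp (-ψ x / σ) :=
    integral_integral_exp_sub_comp_add_eq_mul hψ hψper σ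
  have hRD : R 0 = D := by
    rw [hDfac]
    simpa [hR] using integral_mul_primitive_add_mul_primitive
      (a := fun x => Real.exp (ψ x / σ)) (b := fun x => Real.exp (-ψ x / σ))
      (by fun_prop) (by fun_prop) 1
  have hD : 0 < D := by
    have hpos : ∀ g : ℝ → ℝ, Continuous g → 0 < ∫ x in (0:ℝ)..1, Real.exp (g x) := fun g hg =>
      intervalIntegral_pos_of_pos (hg.rexp.intervalIntegrable 0 1) (fun _ => exp_pos _) one_pos
    rw [hDfac]
    exact mul_pos (hpos _ (by fun_prop)) (hpos _ (by fun_prop))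
  have hIcur : ∀ V, Icur V = (Real.exp (V / σ) - 1) / R V := by
    intro V
    rcases eq_or_ne V 0 with rfl | hV
    · simp [hI0]
    rw [hI V hV, neg_div, one_sub_exp_neg_div_add_exp_neg_mul]
  have hRcont : Continuous R := by fun_prop
  constructor
  · rw [← hRD]
    refine ((hRcont.tendsto 0).mono_left nhdsWithin_le_nhds).congr' ?_
    filter_upwards [self_mem_nhdsWithin] with V hV
    have hnum : Real.exp (V / σ) - 1 ≠ 0 :=
      sub_ne_zero.2 <| Real.exp_eq_one_iff _ |>.not.2 <| div_ne_zero hV hσ.ne'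
    rw [hIcur, div_div_cancel₀ hnum]
  · have hexp : HasDerivAt (fun V => Real.exp (V / σ) - 1) σ⁻¹ 0 := by
      simpa using ((hasDerivAt_id (0:ℝ)).div_const σ).exp.sub_const 1
    simp only [funext hIcur, div_eq_mul_inv, one_mul, mul_inv, ← hRD]
    exact hexp.mul_continuousAt_of_eq_zero (by simp) (hRcont.continuousAt.inv₀ (hRD ▸ hD.ne'))
end

section
/- Let ψ₁, ψ₂ : ℝ → ℝ be continuous, 1-periodic, and anti-symmetric (ψᵢ(−x) = −ψᵢ(x) and ψᵢ(x+1) = ψᵢ(x) for all x). Suppose that for every σ > 0, ∫_{−1}^0 ∫₀¹ exp(σ⁻¹(ψ₁(x) − ψ₁(x+z))) dx dz = ∫_{−1}^0 ∫₀¹ exp(σ⁻¹(ψ₂(x) − ψ₂(x+z))) dx dz. Then ψ₁ and ψ₂ have the same distribution: the pushforward under ψ₁ of Lebesgue measure restricted to [0,1] equals the pushforward under ψ₂ of Lebesgue measure restricted to [0,1]. -/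
/-!
By Fubini and 1-periodicity the double integral factors as `L(t) L(-t)` with `t = σ⁻¹`, where
`L(t) = ∫₀¹ exp (t ψ)` is the moment generating function of the distribution of `ψ` on `[0,1]`.
Anti-symmetry and periodicity give `ψ (1 - x) = -ψ x`, so `L` is even and the double integral
is `L(t)²`. Hence the two moment generating functions agree on all of `ℝ`, where they are finite,
and a moment generating function finite everywhere determines the distribution.
-/

open MeasureTheory intervalIntegral Real ProbabilityTheory Set Function

theorem intervalIntegral_integral_swap {E : Type*} [NormedAddCommGroup E] [NormedSpace ℝ E]
    {f : ℝ → ℝ → E} (hf : Continuous (uncurry f)) {a b c d : ℝ} (hab : a ≤ b) (hcd : c ≤ d) :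
    ∫ x in a..b, ∫ y in c..d, f x y = ∫ y in c..d, ∫ x in a..b, f x y := by
  have hint : Integrable (uncurry f)
      ((volume.restrict (Ioc a b)).prod (volume.restrict (Ioc c d))) := by
    rw [Measure.prod_restrict, ← Measure.volume_eq_prod]
    refine (hf.integrableOn_Icc (a := (a, c)) (b := (b, d))).mono_set ?_
    rw [← Icc_prod_Icc]
    exact prod_mono Ioc_subset_Icc_self Ioc_subset_Icc_self
  simp only [integral_of_le hab, integral_of_le hcd]
  exact integral_integral_swap hint

theorem intervalIntegral_integral_mul_comp_add_periodic {f g : ℝ → ℝ} {T a b : ℝ}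
    (hf : Continuous f) (hg : Continuous g) (hgT : Periodic g T) (hT : 0 ≤ T) (hab : a ≤ b) :
    ∫ z in -T..0, ∫ x in a..b, f x * g (x + z) = (∫ x in a..b, f x) * ∫ x in 0..T, g x := by
  have hinner (x : ℝ) : ∫ z in -T..0, g (x + z) = ∫ x in 0..T, g x := by
    rw [integral_comp_add_left, add_zero, ← sub_eq_add_neg]
    simpa using hgT.intervalIntegral_add_eq (x - T) 0
  calc ∫ z in -T..0, ∫ x in a..b, f x * g (x + z)
      = ∫ x in a..b, ∫ z in -T..0, f x * g (x + z) :=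
        intervalIntegral_integral_swap (by fun_prop) (by linarith) hab
    _ = ∫ x in a..b, f x * ∫ x in 0..T, g x := by
        simp only [intervalIntegral.integral_const_mul, hinner]
    _ = (∫ x in a..b, f x) * ∫ x in 0..T, g x := integral_mul_const _ _

theorem intervalIntegral_comp_neg_of_odd_of_periodic {E : Type*} [NormedAddCommGroup E]
    [NormedSpace ℝ E] {ψ : ℝ → ℝ} {T : ℝ} (hper : Periodic ψ T) (hodd : ψ.Odd) (f : ℝ → E) :
    ∫ x in 0..T, f (-ψ x) = ∫ x in 0..T, f (ψ x) := by
  have hsymm (x : ℝ) : -ψ x = ψ (T - x) := by rw [hper.sub_eq', hodd]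
  simp only [hsymm, integral_comp_sub_left (fun x => f (ψ x)), sub_self, sub_zero]

theorem mgf_volume_restrict_Icc {X : ℝ → ℝ} {a b : ℝ} (hab : a ≤ b) (t : ℝ) :
    mgf X (volume.restrict (Icc a b)) t = ∫ x in a..b, exp (t * X x) := by
  rw [mgf, integral_of_le hab, integral_Icc_eq_integral_Ioc]

theorem mgf_neg_of_odd_of_periodic {ψ : ℝ → ℝ} {T : ℝ} (hT : 0 ≤ T) (hper : Periodic ψ T)
    (hodd : ψ.Odd) (t : ℝ) :
    mgf ψ (volume.restrict (Icc 0 T)) (-t) = mgf ψ (volume.restrict (Icc 0 T)) t := by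
  simp only [mgf_volume_restrict_Icc hT, neg_mul_comm]
  exact intervalIntegral_comp_neg_of_odd_of_periodic hper hodd (fun y => exp (t * y))

theorem intervalIntegral_integral_exp_sub_comp_add_eq_mgf_sq {ψ : ℝ → ℝ} {T : ℝ} (hψ : Continuous ψ)
    (hT : 0 ≤ T) (hper : Periodic ψ T) (hodd : ψ.Odd) (t : ℝ) :
    ∫ z in -T..0, ∫ x in 0..T, exp (t * (ψ x - ψ (x + z))) =
      mgf ψ (volume.restrict (Icc 0 T)) t ^ 2 := by
  have hexp (x z : ℝ) : exp (t * (ψ x - ψ (x + z))) = exp (t * ψ x) * exp (-t * ψ (x + z)) := by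
    rw [← exp_add]; ring_nf
  simp only [hexp]
  rw [intervalIntegral_integral_mul_comp_add_periodic (f := fun x => exp (t * ψ x))
    (g := fun y => exp (-t * ψ y)) (by fun_prop) (by fun_prop)
    (fun x => by simp only [hper x]) hT hT, ← mgf_volume_restrict_Icc hT,
    ← mgf_volume_restrict_Icc hT, mgf_neg_of_odd_of_periodic hT hper hodd, sq]

theorem integrableExpSet_volume_restrict_Icc {X : ℝ → ℝ} (hX : Continuous X) (a b : ℝ) :
    integrableExpSet X (volume.restrict (Icc a b)) = univ :=
  eq_univ_of_forall fun t => (by fun_prop : Continuous fun x => exp (t * X x)).integrableOn_Icc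

theorem MeasureTheory.Measure.map_eq_of_mgf_eq {Ω Ω' : Type*} {mΩ : MeasurableSpace Ω}
    {mΩ' : MeasurableSpace Ω'} {μ : Measure Ω} {μ' : Measure Ω'} [IsFiniteMeasure μ]
    [IsFiniteMeasure μ'] {X : Ω → ℝ} {Y : Ω' → ℝ} (hX : AEMeasurable X μ) (hY : AEMeasurable Y μ')
    (hXY : mgf X μ = mgf Y μ') (hint : integrableExpSet X μ = univ) :
    μ.map X = μ'.map Y := by
  have hμμ' : μ = 0 ↔ μ' = 0 := by
    have h0 := congrFun hXY 0
    rw [mgf_zero', mgf_zero'] at h0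
    rw [← Measure.measure_univ_eq_zero, ← Measure.measure_univ_eq_zero,
      ← measureReal_eq_zero_iff, ← measureReal_eq_zero_iff, h0]
  refine Measure.ext_of_complexMGF_eq hX hY (funext fun z => eqOn_complexMGF_of_mgf' hXY hμμ' ?_)
  simp [hint]

/-- Proposition 2: if two continuous, 1-periodic, anti-symmetric potentials
give the same resistance functional for all temperatures `σ > 0`, then they
have the same distribution on `[0,1]` (equal pushforwards of Lebesgue measure
restricted to `[0,1]`). -/
theorem stmt16 (ψ₁ ψ₂ : ℝ → ℝ)
    (hψ₁ : Continuous ψ₁) (hψ₂ : Continuous ψ₂)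
    (hper₁ : ∀ x, ψ₁ (x + 1) = ψ₁ x) (hper₂ : ∀ x, ψ₂ (x + 1) = ψ₂ x)
    (hodd₁ : ∀ x, ψ₁ (-x) = -ψ₁ x) (hodd₂ : ∀ x, ψ₂ (-x) = -ψ₂ x)
    (heq : ∀ σ : ℝ, 0 < σ →
      (∫ z in (-1:ℝ)..0, ∫ x in (0:ℝ)..1,
        Real.exp (σ⁻¹ * (ψ₁ x - ψ₁ (x + z)))) =
      ∫ z in (-1:ℝ)..0, ∫ x in (0:ℝ)..1,
        Real.exp (σ⁻¹ * (ψ₂ x - ψ₂ (x + z)))) :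
    Measure.map ψ₁ (volume.restrict (Set.Icc (0:ℝ) 1)) =
      Measure.map ψ₂ (volume.restrict (Set.Icc (0:ℝ) 1)) := by
  set μ := volume.restrict (Icc (0:ℝ) 1)
  have hpos (t : ℝ) (ht : 0 < t) : mgf ψ₁ μ t = mgf ψ₂ μ t := by
    have h := heq t⁻¹ (inv_pos.mpr ht)
    rw [inv_inv,
      intervalIntegral_integral_exp_sub_comp_add_eq_mgf_sq hψ₁ zero_le_one hper₁ hodd₁,
      intervalIntegral_integral_exp_sub_comp_add_eq_mgf_sq hψ₂ zero_le_one hper₂ hodd₂] at h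
    exact (sq_eq_sq₀ mgf_nonneg mgf_nonneg).1 h
  have hmgf : mgf ψ₁ μ = mgf ψ₂ μ := by
    ext t
    rcases lt_trichotomy t 0 with ht | rfl | ht
    · rw [← mgf_neg_of_odd_of_periodic zero_le_one hper₁ hodd₁,
        ← mgf_neg_of_odd_of_periodic zero_le_one hper₂ hodd₂]
      exact hpos (-t) (neg_pos.mpr ht)
    · simp only [mgf_zero']
    · exact hpos t ht
  exact Measure.map_eq_of_mgf_eq hψ₁.aemeasurable hψ₂.aemeasurable hmgf
    (integrableExpSet_volume_restrict_Icc hψ₁ 0 1)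
end

section
/- Let ρ : ℝ → ℝ be continuous, strictly positive, and 1-periodic with ∫₀¹ ρ(z) dz = 1, let I ∈ ℝ, and let z : [0, ∞) → ℝ be a differentiable function satisfying z'(t) = −I/ρ(z(t)) for all t ≥ 0. Then lim_{t → ∞} z(t)/t = −I. -/
open MeasureTheory intervalIntegral Filter Topology

/-!
Let `F x = ∫₀ˣ ρ`. Since `ρ` is 1-periodic with unit mean, `F x - x` is periodic and continuous,
hence bounded. Along the orbit, `(F ∘ z)' = ρ(z) · (-I/ρ(z)) = -I`, so `F (z t) = F (z 0) - I t`.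
Therefore `z t = -I t + O(1)`, and `z t / t → -I`.
-/

open Asymptotics Set

namespace Function.Periodic

variable {ρ : ℝ → ℝ} {T : ℝ}

theorem intervalIntegral_sub_mul_periodic (hρ : Periodic ρ T) (hT : T ≠ 0)
    (hint : ∀ a b, IntervalIntegrable ρ volume a b) :
    Periodic (fun x => (∫ s in 0..x, ρ s) - (∫ s in 0..T, ρ s) / T * x) T := by
  intro x
  simp only
  rw [hρ.intervalIntegral_add_eq_add 0 x hint, zero_add]
  field_simp
  ring

theorem exists_abs_intervalIntegral_sub_mul_le (hρ : Periodic ρ T) (hT : T ≠ 0)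
    (hc : Continuous ρ) :
    ∃ C, ∀ x, |(∫ s in 0..x, ρ s) - (∫ s in 0..T, ρ s) / T * x| ≤ C := by
  have hcont : Continuous fun x => (∫ s in 0..x, ρ s) - (∫ s in 0..T, ρ s) / T * x := by
    fun_prop
  obtain ⟨C, hC⟩ := ((hρ.intervalIntegral_sub_mul_periodic hT
    (hc.intervalIntegrable)).isBounded_of_continuous hT hcont).exists_norm_le
  exact ⟨C, fun x => hC _ (mem_range_self x)⟩

end Function.Periodic

theorem eq_add_mul_of_hasDerivWithinAt_Ici {g : ℝ → ℝ} {c : ℝ}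
    (hg : ∀ t, 0 ≤ t → HasDerivWithinAt g c (Ici 0) t) (t : ℝ) (ht : 0 ≤ t) :
    g t = g 0 + c * t := by
  have hcont : ContinuousOn g (Icc 0 t) := fun s hs =>
    (hg s hs.1).continuousWithinAt.mono fun _ hr => hr.1
  refine eq_of_has_deriv_right_eq (f' := fun _ => c)
    (fun s hs => (hg s hs.1).mono (Ici_subset_Ici.2 hs.1))
    (fun s _ => ((hasDerivAt_id s).const_mul c).hasDerivWithinAt.const_add (g 0) |>.congr_deriv
      (mul_one c)) hcont (by fun_prop) (by simp) t ⟨ht, le_rfl⟩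

theorem comp_eq_sub_mul_of_hasDerivWithinAt_neg_div {F ρ z : ℝ → ℝ} {I : ℝ}
    (hF : ∀ x, HasDerivAt F (ρ x) x) (hρ : ∀ x, ρ x ≠ 0)
    (hz : ∀ t, 0 ≤ t → HasDerivWithinAt z (-I / ρ (z t)) (Ici 0) t) (t : ℝ) (ht : 0 ≤ t) :
    F (z t) = F (z 0) - I * t := by
  have hFz : ∀ s, 0 ≤ s → HasDerivWithinAt (F ∘ z) (-I) (Ici 0) s := fun s hs => by
    simpa [mul_div_cancel₀ _ (hρ (z s))] using (hF (z s)).comp_hasDerivWithinAt s (hz s hs)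
  simpa [sub_eq_add_neg, neg_mul] using eq_add_mul_of_hasDerivWithinAt_Ici hFz t ht

theorem tendsto_div_atTop_of_isBigO_sub_mul {f : ℝ → ℝ} {L : ℝ}
    (h : (fun t => f t - L * t) =O[atTop] fun _ => (1 : ℝ)) :
    Tendsto (fun t => f t / t) atTop (𝓝 L) := by
  have h0 := (h.trans_isLittleO (isLittleO_const_id_atTop (1 : ℝ))).tendsto_div_nhds_zero
  rw [← zero_add L]
  refine (h0.add_const L).congr' ?_
  filter_upwards [eventually_ne_atTop 0] with t ht
  simp only [id]
  field_simp
  ring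

/-- A particle moving with velocity `z' = -I/ρ(z)`, where `ρ` is a continuous,
strictly positive, 1-periodic density with `∫₀¹ ρ = 1`, has mean velocity
`lim_{t→∞} z(t)/t = -I`. -/
theorem stmt17 (ρ : ℝ → ℝ) (hρc : Continuous ρ) (hρpos : ∀ x, 0 < ρ x)
    (hρper : ∀ x, ρ (x + 1) = ρ x)
    (hnorm : (∫ x in (0:ℝ)..1, ρ x) = 1)
    (I : ℝ) (z : ℝ → ℝ)
    (hz : ∀ t : ℝ, 0 ≤ t →
      HasDerivWithinAt z (-I / ρ (z t)) (Set.Ici (0:ℝ)) t) :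
    Tendsto (fun t => z t / t) atTop (𝓝 (-I)) := by
  set F := fun x => ∫ s in (0:ℝ)..x, ρ s
  have hF : ∀ x, HasDerivAt F (ρ x) x := fun x => (hρc.integral_hasStrictDerivAt 0 x).hasDerivAt
  obtain ⟨C, hC⟩ := Function.Periodic.exists_abs_intervalIntegral_sub_mul_le hρper one_ne_zero hρc
  simp only [hnorm, div_one, one_mul] at hC
  have hFz := comp_eq_sub_mul_of_hasDerivWithinAt_neg_div hF (fun x => (hρpos x).ne') hz
  refine tendsto_div_atTop_of_isBigO_sub_mul (.of_bound (C + |F (z 0)|) ?_)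
  filter_upwards [eventually_ge_atTop 0] with t ht
  have hzt : z t - -I * t = F (z 0) - (F (z t) - z t) := by rw [hFz t ht]; ring
  rw [norm_one, mul_one, Real.norm_eq_abs, hzt]
  calc |F (z 0) - (F (z t) - z t)| ≤ |F (z 0)| + |F (z t) - z t| := abs_sub _ _
    _ ≤ C + |F (z 0)| := by linarith [hC (z t)]
end
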